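/- arXiv:2405.06437 — 3 statements merged into one kernel-verified Lean document; each statement's English description precedes it below -/
import Mathlib

section
/- Exact local minimax risk of the plug-in preliminary-test estimator for max(θ,0) in the Gaussian location model (second part of Proposition 6.1 of the paper). Let n ≥ 1 be an integer and δ > 0. For θ ∈ ℝ let P_θⁿ be the n-fold product of the Gaussian measure N(θ,1), let X̄ₙ := (1/n)∑_{i=1}^n X_i, define the pre-test estimator θ̂ := X̄ₙ if |X̄ₙ| ≥ n^{-1/4} and θ̂ := 0 otherwise, and let S := max(θ̂, 0). Then sup_{|θ|<δ} n · E_{P_θⁿ} |S − max(θ,0)|² = sup_{0 ≤ θ < δ} { E[ Z² · 1{Z ≥ n^{1/4} − √n·θ} ] + n θ² · P( Z < n^{1/4} − √n·θ ) }, where Z is a standard normal random variable. -/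
open MeasureTheory ProbabilityTheory ENNReal

namespace PluginAux

open Real
open scoped NNReal


lemma gauss_prod_eq (v w : ℝ≥0) (hv : v ≠ 0) (hw : w ≠ 0) (z x : ℝ) :
    gaussianPDFReal 0 v x * gaussianPDFReal 0 w (z - x)
      = ((Real.sqrt (2 * π * v))⁻¹ * (Real.sqrt (2 * π * w))⁻¹
          * rexp (- z ^ 2 / (2 * ((v:ℝ) + w))))
        * rexp (- (((v:ℝ) + w) / (2 * v * w)) * (x - v * z / ((v:ℝ) + w)) ^ 2) := by
  have hv0 : (0:ℝ) < v := lt_of_le_of_ne (NNReal.coe_nonneg v) (by exact_mod_cast (Ne.symm hv))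
  have hw0 : (0:ℝ) < w := lt_of_le_of_ne (NNReal.coe_nonneg w) (by exact_mod_cast (Ne.symm hw))
  have hvw : (0:ℝ) < (v:ℝ) + w := by linarith
  have hexp : - x ^ 2 / (2 * (v:ℝ)) + - (z - x) ^ 2 / (2 * (w:ℝ))
      = - z ^ 2 / (2 * ((v:ℝ) + w))
        + - (((v:ℝ) + w) / (2 * v * w)) * (x - v * z / ((v:ℝ) + w)) ^ 2 := by
    field_simp
    ring
  simp only [gaussianPDFReal, sub_zero]
  rw [mul_mul_mul_comm, ← Real.exp_add, hexp, Real.exp_add]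
  ring

lemma gauss_conv_integrable (v w : ℝ≥0) (hv : v ≠ 0) (hw : w ≠ 0) (z : ℝ) :
    Integrable (fun x => gaussianPDFReal 0 v x * gaussianPDFReal 0 w (z - x)) := by
  have hv0 : (0:ℝ) < v := lt_of_le_of_ne (NNReal.coe_nonneg v) (by exact_mod_cast (Ne.symm hv))
  have hw0 : (0:ℝ) < w := lt_of_le_of_ne (NNReal.coe_nonneg w) (by exact_mod_cast (Ne.symm hw))
  have ha : (0:ℝ) < ((v:ℝ) + w) / (2 * v * w) := by positivity
  simp_rw [gauss_prod_eq v w hv hw z]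
  exact (((integrable_exp_neg_mul_sq ha).comp_sub_right (v * z / ((v:ℝ) + w))).const_mul _)

lemma gauss_conv_integral (v w : ℝ≥0) (hv : v ≠ 0) (hw : w ≠ 0) (z : ℝ) :
    ∫ x, gaussianPDFReal 0 v x * gaussianPDFReal 0 w (z - x)
      = gaussianPDFReal 0 (v + w) z := by
  have hv0 : (0:ℝ) < v := lt_of_le_of_ne (NNReal.coe_nonneg v) (by exact_mod_cast (Ne.symm hv))
  have hw0 : (0:ℝ) < w := lt_of_le_of_ne (NNReal.coe_nonneg w) (by exact_mod_cast (Ne.symm hw))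
  have hvw : (0:ℝ) < (v:ℝ) + w := by linarith
  have ha : (0:ℝ) < ((v:ℝ) + w) / (2 * v * w) := by positivity
  simp_rw [gauss_prod_eq v w hv hw z]
  rw [integral_const_mul]
  rw [integral_sub_right_eq_self (fun x : ℝ => rexp (- (((v:ℝ) + w) / (2 * v * w)) * x ^ 2))
    ((v:ℝ) * z / ((v:ℝ) + w))]
  rw [integral_gaussian]
  -- now constants
  have hcoe : ((v + w : ℝ≥0) : ℝ) = (v:ℝ) + w := by push_cast; ring
  rw [gaussianPDFReal, hcoe, sub_zero]
  rw [show ((√(2 * π * (v:ℝ)))⁻¹ * (√(2 * π * (w:ℝ)))⁻¹ * rexp (- z ^ 2 / (2 * ((v:ℝ) + w))))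
        * √(π / (((v:ℝ) + w) / (2 * v * w)))
      = ((√(2 * π * (v:ℝ)))⁻¹ * (√(2 * π * (w:ℝ)))⁻¹ * √(π / (((v:ℝ) + w) / (2 * v * w))))
        * rexp (- z ^ 2 / (2 * ((v:ℝ) + w))) from by ring]
  congr 1
  rw [← mul_inv, ← Real.sqrt_mul (by positivity)]
  rw [show (√(2 * π * (v:ℝ) * (2 * π * w)))⁻¹ * √(π / (((v:ℝ) + w) / (2 * v * w)))
      = √(π / (((v:ℝ) + w) / (2 * v * w))) / √(2 * π * (v:ℝ) * (2 * π * w)) from by ring]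
  rw [← Real.sqrt_div (by positivity)]
  rw [show π / (((v:ℝ) + w) / (2 * v * w)) / (2 * π * (v:ℝ) * (2 * π * w))
      = (2 * π * ((v:ℝ) + w))⁻¹ from by field_simp]
  rw [Real.sqrt_inv]

lemma lintegral_gaussPDF_conv (v w : ℝ≥0) (hv : v ≠ 0) (hw : w ≠ 0) (z : ℝ) :
    ∫⁻ x, gaussianPDF 0 v x * gaussianPDF 0 w (z - x) = gaussianPDF 0 (v + w) z := by
  simp_rw [gaussianPDF, ← ENNReal.ofReal_mul (gaussianPDFReal_nonneg 0 v _)]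
  rw [← ofReal_integral_eq_lintegral_ofReal (gauss_conv_integrable v w hv hw z)
      (ae_of_all _ fun x => mul_nonneg (gaussianPDFReal_nonneg _ _ _)
        (gaussianPDFReal_nonneg _ _ _)),
    gauss_conv_integral v w hv hw z]

lemma gaussian_conv_centered (v w : ℝ≥0) (hv : v ≠ 0) (hw : w ≠ 0) :
    Measure.map (fun p : ℝ × ℝ => p.1 + p.2)
      ((gaussianReal 0 v).prod (gaussianReal 0 w)) = gaussianReal 0 (v + w) := by
  have hvw : v + w ≠ 0 := fun h => hv (by simpa using (add_eq_zero.mp h).1)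
  set f := gaussianPDF 0 v with hf
  set g := gaussianPDF 0 w with hg
  have hmf : Measurable f := measurable_gaussianPDF _ _
  have hmg : Measurable g := measurable_gaussianPDF _ _
  have hft : ∀ x, f x ≠ ⊤ := fun x => by simp [hf, gaussianPDF]
  ext s hs
  have hmadd : Measurable (fun p : ℝ × ℝ => p.1 + p.2) := measurable_fst.add measurable_snd
  rw [Measure.map_apply hmadd hs]
  set h : ℝ → ℝ≥0∞ := s.indicator (fun _ => 1) with hh
  have hmh : Measurable h := measurable_one.indicator hs
  have hht : ∀ y, h y ≠ ⊤ := fun y => by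
    by_cases hy : y ∈ s <;> simp [hh, Set.indicator_apply, hy]
  have step1 : ((gaussianReal 0 v).prod (gaussianReal 0 w))
      ((fun p : ℝ × ℝ => p.1 + p.2) ⁻¹' s)
      = ∫⁻ x, ∫⁻ y, h (x + y) ∂(gaussianReal 0 w) ∂(gaussianReal 0 v) := by
    rw [← lintegral_indicator_one (hmadd hs), lintegral_prod _
      ((measurable_one.indicator (hmadd hs)).aemeasurable)]
    refine lintegral_congr fun x => lintegral_congr fun y => ?_
    by_cases hxy : x + y ∈ s <;> simp [hh, Set.indicator_apply, hxy]
  rw [step1]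
  have step2 : ∀ x : ℝ, ∫⁻ y, h (x + y) ∂(gaussianReal 0 w)
      = ∫⁻ y, g (y - x) * h y := by
    intro x
    have hm : Measurable (fun y : ℝ => h (x + y)) := hmh.comp (measurable_const.add measurable_id)
    rw [gaussianReal_of_var_ne_zero _ hw,
      lintegral_withDensity_eq_lintegral_mul _ hmg hm]
    calc ∫⁻ y, (g * fun y => h (x + y)) y
        = ∫⁻ y, g (x + y - x) * h (x + y) := by
          refine lintegral_congr fun y => ?_
          simp
      _ = ∫⁻ y, g (y - x) * h y :=
          lintegral_add_left_eq_self (fun y => g (y - x) * h y) x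
  simp_rw [step2]
  have hm2 : Measurable (Function.uncurry fun x y : ℝ => f x * (g (y - x) * h y)) :=
    (hmf.comp measurable_fst).mul
      ((hmg.comp (measurable_snd.sub measurable_fst)).mul (hmh.comp measurable_snd))
  have hminner : Measurable (fun x : ℝ => ∫⁻ y, g (y - x) * h y) := by
    have : Measurable (Function.uncurry fun x y : ℝ => g (y - x) * h y) :=
      (hmg.comp (measurable_snd.sub measurable_fst)).mul (hmh.comp measurable_snd)
    exact this.lintegral_prod_right
  have step3 : ∫⁻ x, (∫⁻ y, g (y - x) * h y) ∂(gaussianReal 0 v)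
      = ∫⁻ x, f x * ∫⁻ y, g (y - x) * h y := by
    rw [gaussianReal_of_var_ne_zero _ hv,
      lintegral_withDensity_eq_lintegral_mul _ hmf hminner]
    rfl
  rw [step3]
  have step4 : ∫⁻ x, f x * ∫⁻ y, g (y - x) * h y
      = ∫⁻ y, (∫⁻ x, f x * g (y - x)) * h y := by
    calc ∫⁻ x, f x * ∫⁻ y, g (y - x) * h y
        = ∫⁻ x, ∫⁻ y, f x * (g (y - x) * h y) := by
          refine lintegral_congr fun x => ?_
          exact (lintegral_const_mul' (f x) _ (hft x)).symm
      _ = ∫⁻ y, ∫⁻ x, f x * (g (y - x) * h y) := lintegral_lintegral_swap hm2.aemeasurable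
      _ = ∫⁻ y, (∫⁻ x, f x * g (y - x)) * h y := by
          refine lintegral_congr fun y => ?_
          rw [← lintegral_mul_const' (h y) _ (hht y)]
          refine lintegral_congr fun x => ?_
          ring
  rw [step4]
  have step5 : ∀ y : ℝ, (∫⁻ x, f x * g (y - x)) = gaussianPDF 0 (v + w) y :=
    fun y => lintegral_gaussPDF_conv v w hv hw y
  simp_rw [step5]
  rw [gaussianReal_of_var_ne_zero _ hvw, withDensity_apply _ hs]
  calc ∫⁻ y, gaussianPDF 0 (v + w) y * h y
      = ∫⁻ y, s.indicator (gaussianPDF 0 (v + w)) y := by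
        refine lintegral_congr fun y => ?_
        by_cases hy : y ∈ s <;> simp [hh, Set.indicator_apply, hy]
    _ = ∫⁻ y in s, gaussianPDF 0 (v + w) y := lintegral_indicator hs _

lemma gaussian_conv (m l : ℝ) (v w : ℝ≥0) (hv : v ≠ 0) (hw : w ≠ 0) :
    Measure.map (fun p : ℝ × ℝ => p.1 + p.2)
      ((gaussianReal m v).prod (gaussianReal l w)) = gaussianReal (m + l) (v + w) := by
  have hmadd : Measurable (fun p : ℝ × ℝ => p.1 + p.2) := measurable_fst.add measurable_snd
  have h1 : gaussianReal m v = (gaussianReal 0 v).map (· + m) := by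
    rw [gaussianReal_map_add_const, zero_add]
  have h2 : gaussianReal l w = (gaussianReal 0 w).map (· + l) := by
    rw [gaussianReal_map_add_const, zero_add]
  rw [h1, h2, Measure.map_prod_map _ _ (measurable_add_const m) (measurable_add_const l),
    Measure.map_map hmadd ((measurable_add_const m).prodMap (measurable_add_const l))]
  have h3 : ((fun p : ℝ × ℝ => p.1 + p.2) ∘ Prod.map (· + m) (· + l))
      = (fun z : ℝ => z + (m + l)) ∘ (fun p : ℝ × ℝ => p.1 + p.2) := by
    funext p
    simp [Prod.map]
    ring
  rw [h3, ← Measure.map_map (measurable_add_const (m + l)) hmadd,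
    gaussian_conv_centered v w hv hw, gaussianReal_map_add_const, zero_add]

lemma gaussian_pi_sum (θ : ℝ) : ∀ n : ℕ, 1 ≤ n →
    Measure.map (fun x : Fin n → ℝ => ∑ i, x i) (Measure.pi fun _ => gaussianReal θ 1)
      = gaussianReal (n * θ) n := by
  refine Nat.le_induction ?_ ?_
  · have h : (fun x : Fin 1 → ℝ => ∑ i, x i) = (MeasurableEquiv.funUnique (Fin 1) ℝ) := by
      funext x
      simp [MeasurableEquiv.funUnique, Fin.sum_univ_one]
    rw [h]
    erw [(measurePreserving_funUnique (gaussianReal θ 1) (Fin 1)).map_eq]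
    norm_num
  · intro n hn ih
    set e := MeasurableEquiv.piFinSuccAbove (fun _ : Fin (n + 1) => ℝ) 0 with he
    have hpres := measurePreserving_piFinSuccAbove (fun _ : Fin (n + 1) => gaussianReal θ 1) 0
    have hsum_n : Measurable (fun y : Fin n → ℝ => ∑ j, y j) :=
      Finset.measurable_sum Finset.univ fun j _ => measurable_pi_apply j
    have hS : Measurable (fun p : ℝ × (Fin n → ℝ) => p.1 + ∑ j, p.2 j) :=
      measurable_fst.add (hsum_n.comp measurable_snd)
    have hcomp : (fun x : Fin (n + 1) → ℝ => ∑ i, x i)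
        = (fun p : ℝ × (Fin n → ℝ) => p.1 + ∑ j, p.2 j) ∘ e := by
      funext x
      simp [he, MeasurableEquiv.piFinSuccAbove, Fin.sum_univ_succ, Fin.zero_succAbove, Fin.tail]
    rw [hcomp, ← Measure.map_map hS e.measurable, hpres.map_eq]
    have hmadd : Measurable (fun p : ℝ × ℝ => p.1 + p.2) := measurable_fst.add measurable_snd
    have h4 : (fun p : ℝ × (Fin n → ℝ) => p.1 + ∑ j, p.2 j)
        = (fun q : ℝ × ℝ => q.1 + q.2) ∘ Prod.map (id : ℝ → ℝ) (fun y : Fin n → ℝ => ∑ j, y j) :=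
      rfl
    have h5 := Measure.map_prod_map (gaussianReal θ 1)
      (Measure.pi fun _ : Fin n => gaussianReal θ 1) (measurable_id (α := ℝ)) hsum_n
    rw [Measure.map_id] at h5
    rw [h4, ← Measure.map_map hmadd (measurable_id.prodMap hsum_n), ← h5, ih,
      gaussian_conv θ (n * θ) 1 n one_ne_zero (by positivity)]
    congr 1
    · push_cast
      ring
    · push_cast
      ring

lemma bar_law (n : ℕ) (hn : 1 ≤ n) (θ : ℝ) :
    Measure.map (fun x : Fin n → ℝ => (∑ i, x i) / (n : ℝ))
        (Measure.pi fun _ : Fin n => gaussianReal θ 1)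
      = Measure.map (fun z : ℝ => θ + z / Real.sqrt n) (gaussianReal 0 1) := by
  have hn0 : (0:ℝ) < n := by exact_mod_cast hn
  have hsum : Measurable (fun x : Fin n → ℝ => ∑ i, x i) :=
    Finset.measurable_sum Finset.univ fun j _ => measurable_pi_apply j
  have h1 : (fun x : Fin n → ℝ => (∑ i, x i) / (n : ℝ))
      = (fun z : ℝ => z * ((n : ℝ))⁻¹) ∘ (fun x : Fin n → ℝ => ∑ i, x i) := by
    funext x
    simp [div_eq_mul_inv]
  rw [h1, ← Measure.map_map (measurable_mul_const _) hsum, gaussian_pi_sum θ n hn,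
    gaussianReal_map_mul_const]
  have h2 : (fun z : ℝ => θ + z / Real.sqrt n)
      = (fun y : ℝ => θ + y) ∘ (fun z : ℝ => z * (Real.sqrt n)⁻¹) := by
    funext z
    simp [div_eq_mul_inv]
  rw [h2, ← Measure.map_map (measurable_const_add θ) (measurable_mul_const _),
    gaussianReal_map_mul_const, gaussianReal_map_const_add]
  congr 1
  · field_simp
    ring
  · ext
    push_cast
    rw [inv_pow, inv_pow, Real.sq_sqrt hn0.le, mul_one]
    field_simp

lemma pointwise_eval (n : ℕ) (hn : 1 ≤ n) (θ : ℝ) (hθ : 0 ≤ θ) (z : ℝ) :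
    (n : ℝ≥0∞) * ENNReal.ofReal
        ((max (if (n : ℝ) ^ (-(1/4 : ℝ)) ≤ |θ + z / Real.sqrt n|
                then θ + z / Real.sqrt n else 0) 0 - max θ 0) ^ 2)
      = (Set.Ici ((n : ℝ) ^ ((1/4 : ℝ)) - Real.sqrt n * θ)).indicator
          (fun z => ENNReal.ofReal (z ^ 2)) z
        + (Set.Iio ((n : ℝ) ^ ((1/4 : ℝ)) - Real.sqrt n * θ)).indicator
            (fun _ => ENNReal.ofReal ((n : ℝ) * θ ^ 2)) z := by
  have hn0 : (0:ℝ) < n := by exact_mod_cast hn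
  have hs : (0:ℝ) < Real.sqrt n := Real.sqrt_pos.2 hn0
  have hs2 : (Real.sqrt n) ^ 2 = (n:ℝ) := Real.sq_sqrt hn0.le
  have hc : (0:ℝ) < (n : ℝ) ^ (-(1/4 : ℝ)) := Real.rpow_pos_of_pos hn0 _
  have hkey : (n : ℝ) ^ ((1/4 : ℝ)) = Real.sqrt n * (n : ℝ) ^ (-(1/4 : ℝ)) := by
    rw [Real.sqrt_eq_rpow, ← Real.rpow_add hn0]
    norm_num
  set c : ℝ := (n : ℝ) ^ (-(1/4 : ℝ)) with hcdef
  set s : ℝ := Real.sqrt n with hsdef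
  set m : ℝ := θ + z / s with hmdef
  have hzm : z = s * (m - θ) := by
    rw [hmdef]
    field_simp
    ring
  by_cases hz : s * c - s * θ ≤ z
  · -- large z
    have hmem : z ∈ Set.Ici ((n:ℝ) ^ ((1/4 : ℝ)) - s * θ) := by
      rw [Set.mem_Ici, hkey]
      linarith
    have hnotmem : z ∉ Set.Iio ((n:ℝ) ^ ((1/4 : ℝ)) - s * θ) := by
      rw [Set.mem_Iio, not_lt, hkey]
      linarith
    have hm : c ≤ m := by
      have h1 : s * c ≤ s * m := by nlinarith
      exact le_of_mul_le_mul_left h1 hs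
    have hmpos : 0 < m := lt_of_lt_of_le hc hm
    rw [if_pos (by rw [abs_of_pos hmpos]; exact hm), max_eq_left hmpos.le, max_eq_left hθ,
      Set.indicator_of_mem hmem, Set.indicator_of_notMem hnotmem, add_zero]
    have hsub : m - θ = z / s := by rw [hmdef]; ring
    rw [hsub, show ((n:ℕ) : ℝ≥0∞) = ENNReal.ofReal ((n:ℕ) : ℝ) from (ENNReal.ofReal_natCast n).symm,
      ← ENNReal.ofReal_mul (by positivity)]
    congr 1
    rw [div_pow, ← hs2]
    field_simp
  · -- small z
    push_neg at hz
    have hmem : z ∈ Set.Iio ((n:ℝ) ^ ((1/4 : ℝ)) - s * θ) := by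
      rw [Set.mem_Iio, hkey]
      linarith
    have hnotmem : z ∉ Set.Ici ((n:ℝ) ^ ((1/4 : ℝ)) - s * θ) := by
      rw [Set.mem_Ici, not_le, hkey]
      linarith
    have hm : m < c := by
      have h1 : s * m < s * c := by nlinarith
      exact lt_of_mul_lt_mul_left h1 hs.le
    have hmax : max (if c ≤ |m| then m else 0) 0 = 0 := by
      by_cases hif : c ≤ |m|
      · rw [if_pos hif]
        rcases le_abs.mp hif with h | h
        · linarith
        · exact max_eq_right (by linarith)
      · rw [if_neg hif]
        exact max_self 0
    rw [hmax, max_eq_left hθ, zero_sub, neg_sq,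
      Set.indicator_of_mem hmem, Set.indicator_of_notMem hnotmem, zero_add,
      show ((n:ℕ) : ℝ≥0∞) = ENNReal.ofReal ((n:ℕ) : ℝ) from (ENNReal.ofReal_natCast n).symm,
      ← ENNReal.ofReal_mul (by positivity)]

lemma pointwise_le (n : ℕ) (hn : 1 ≤ n) (θ : ℝ) (hθ : θ < 0) (z : ℝ) :
    (n : ℝ≥0∞) * ENNReal.ofReal
        ((max (if (n : ℝ) ^ (-(1/4 : ℝ)) ≤ |θ + z / Real.sqrt n|
                then θ + z / Real.sqrt n else 0) 0 - max θ 0) ^ 2)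
      ≤ (Set.Ici ((n : ℝ) ^ ((1/4 : ℝ)))).indicator (fun z => ENNReal.ofReal (z ^ 2)) z := by
  have hn0 : (0:ℝ) < n := by exact_mod_cast hn
  have hs : (0:ℝ) < Real.sqrt n := Real.sqrt_pos.2 hn0
  have hs2 : (Real.sqrt n) ^ 2 = (n:ℝ) := Real.sq_sqrt hn0.le
  have hc : (0:ℝ) < (n : ℝ) ^ (-(1/4 : ℝ)) := Real.rpow_pos_of_pos hn0 _
  have hkey : (n : ℝ) ^ ((1/4 : ℝ)) = Real.sqrt n * (n : ℝ) ^ (-(1/4 : ℝ)) := by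
    rw [Real.sqrt_eq_rpow, ← Real.rpow_add hn0]
    norm_num
  set c : ℝ := (n : ℝ) ^ (-(1/4 : ℝ)) with hcdef
  set s : ℝ := Real.sqrt n with hsdef
  set m : ℝ := θ + z / s with hmdef
  have hzm : z = s * (m - θ) := by
    rw [hmdef]
    field_simp
    ring
  rw [max_eq_right hθ.le]
  by_cases hm : c ≤ m
  · have hmpos : 0 < m := lt_of_lt_of_le hc hm
    have hzlarge : (n : ℝ) ^ ((1/4 : ℝ)) ≤ z := by
      rw [hkey]
      nlinarith
    rw [if_pos (by rw [abs_of_pos hmpos]; exact hm), max_eq_left hmpos.le,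
      Set.indicator_of_mem (Set.mem_Ici.mpr hzlarge), sub_zero,
      show ((n:ℕ) : ℝ≥0∞) = ENNReal.ofReal ((n:ℕ) : ℝ) from (ENNReal.ofReal_natCast n).symm,
      ← ENNReal.ofReal_mul (by positivity)]
    apply ENNReal.ofReal_le_ofReal
    have hsm : 0 ≤ s * m := by positivity
    have hzsm : s * m ≤ z := by nlinarith
    nlinarith
  · have hmax : max (if c ≤ |m| then m else 0) 0 = 0 := by
      push_neg at hm
      by_cases hif : c ≤ |m|
      · rw [if_pos hif]
        rcases le_abs.mp hif with h | h
        · linarith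
        · exact max_eq_right (by linarith)
      · rw [if_neg hif]
        exact max_self 0
    rw [hmax]
    simp

section Main

variable (n : ℕ)

/-- loss as a function of the empirical-mean value -/
noncomputable def F (n : ℕ) (θ : ℝ) (m : ℝ) : ℝ≥0∞ :=
  ENNReal.ofReal
    ((max (if (n : ℝ) ^ (-(1/4 : ℝ)) ≤ |m| then m else 0) 0 - max θ 0) ^ 2)

lemma measurable_F (n : ℕ) (θ : ℝ) : Measurable (F n θ) := by
  apply Measurable.ennreal_ofReal
  apply Measurable.pow_const
  apply Measurable.sub _ measurable_const
  apply Measurable.max _ measurable_const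
  exact Measurable.ite (measurableSet_le measurable_const measurable_id.abs)
    measurable_id measurable_const

lemma risk_transfer (n : ℕ) (hn : 1 ≤ n) (θ : ℝ) :
    ∫⁻ x, F n θ ((∑ i, x i) / (n : ℝ)) ∂(Measure.pi fun _ : Fin n => gaussianReal θ 1)
      = ∫⁻ z, F n θ (θ + z / Real.sqrt n) ∂(gaussianReal 0 1) := by
  have hbar : Measurable (fun x : Fin n → ℝ => (∑ i, x i) / (n : ℝ)) :=
    (Finset.measurable_sum Finset.univ fun j _ => measurable_pi_apply j).div_const _
  have hmean : Measurable (fun z : ℝ => θ + z / Real.sqrt n) :=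
    measurable_const.add (measurable_id.div_const _)
  have h1 := lintegral_map (μ := Measure.pi fun _ : Fin n => gaussianReal θ 1)
    (measurable_F n θ) hbar
  rw [bar_law n hn θ] at h1
  have h2 := lintegral_map (μ := gaussianReal 0 1) (measurable_F n θ) hmean
  exact h1.symm.trans h2

lemma risk_eval (n : ℕ) (hn : 1 ≤ n) (θ : ℝ) (hθ : 0 ≤ θ) :
    (n : ℝ≥0∞) * ∫⁻ z, F n θ (θ + z / Real.sqrt n) ∂(gaussianReal 0 1)
      = (∫⁻ z in Set.Ici ((n : ℝ) ^ ((1/4 : ℝ)) - Real.sqrt n * θ),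
            ENNReal.ofReal (z ^ 2) ∂(gaussianReal 0 1))
          + ENNReal.ofReal ((n : ℝ) * θ ^ 2)
              * (gaussianReal 0 1) {z : ℝ | z < (n : ℝ) ^ ((1/4 : ℝ)) - Real.sqrt n * θ} := by
  calc (n : ℝ≥0∞) * ∫⁻ z, F n θ (θ + z / Real.sqrt n) ∂(gaussianReal 0 1)
      = ∫⁻ z, (n : ℝ≥0∞) * F n θ (θ + z / Real.sqrt n) ∂(gaussianReal 0 1) :=
        (lintegral_const_mul' _ _ (ENNReal.natCast_ne_top n)).symm
    _ = ∫⁻ z, ((Set.Ici ((n : ℝ) ^ ((1/4 : ℝ)) - Real.sqrt n * θ)).indicator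
          (fun z => ENNReal.ofReal (z ^ 2)) z
        + (Set.Iio ((n : ℝ) ^ ((1/4 : ℝ)) - Real.sqrt n * θ)).indicator
            (fun _ => ENNReal.ofReal ((n : ℝ) * θ ^ 2)) z) ∂(gaussianReal 0 1) :=
        lintegral_congr fun z => pointwise_eval n hn θ hθ z
    _ = _ := by
        rw [lintegral_add_left
          (((by fun_prop : Measurable fun z : ℝ => ENNReal.ofReal (z ^ 2)).indicator measurableSet_Ici))]
        rw [lintegral_indicator measurableSet_Ici, lintegral_indicator measurableSet_Iio,
          setLIntegral_const]
        rfl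

lemma risk_le (n : ℕ) (hn : 1 ≤ n) (θ : ℝ) (hθ : θ < 0) :
    (n : ℝ≥0∞) * ∫⁻ z, F n θ (θ + z / Real.sqrt n) ∂(gaussianReal 0 1)
      ≤ ∫⁻ z in Set.Ici ((n : ℝ) ^ ((1/4 : ℝ))),
          ENNReal.ofReal (z ^ 2) ∂(gaussianReal 0 1) := by
  calc (n : ℝ≥0∞) * ∫⁻ z, F n θ (θ + z / Real.sqrt n) ∂(gaussianReal 0 1)
      = ∫⁻ z, (n : ℝ≥0∞) * F n θ (θ + z / Real.sqrt n) ∂(gaussianReal 0 1) :=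
        (lintegral_const_mul' _ _ (ENNReal.natCast_ne_top n)).symm
    _ ≤ ∫⁻ z, (Set.Ici ((n : ℝ) ^ ((1/4 : ℝ)))).indicator
          (fun z => ENNReal.ofReal (z ^ 2)) z ∂(gaussianReal 0 1) :=
        lintegral_mono fun z => pointwise_le n hn θ hθ z
    _ = _ := lintegral_indicator measurableSet_Ici _

end Main

end PluginAux


open PluginAux in
/-- **Exact local minimax risk of the plug-in preliminary-test estimator for `max(θ,0)`
in the Gaussian location model (second part of Proposition 6.1).** The pre-test
estimator keeps the sample mean when `|X̄ₙ| ≥ n^{-1/4}` and is zero otherwise. -/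
theorem plugin_pretest_exact_local_risk (n : ℕ) (hn : 1 ≤ n) (δ : ℝ) (hδ : 0 < δ) :
    (⨆ θ ∈ {θ : ℝ | |θ| < δ},
      (n : ℝ≥0∞) *
        ∫⁻ x, ENNReal.ofReal
            ((max (if (n : ℝ) ^ (-(1/4 : ℝ)) ≤ |(∑ i, x i) / (n : ℝ)|
                    then (∑ i, x i) / (n : ℝ) else 0) 0
              - max θ 0) ^ 2)
          ∂(Measure.pi fun _ : Fin n => gaussianReal θ 1))
    = ⨆ θ ∈ Set.Ico (0:ℝ) δ,
        ((∫⁻ z in Set.Ici ((n : ℝ) ^ ((1/4 : ℝ)) - Real.sqrt n * θ),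
            ENNReal.ofReal (z ^ 2) ∂(gaussianReal 0 1))
          + ENNReal.ofReal ((n : ℝ) * θ ^ 2)
              * (gaussianReal 0 1) {z : ℝ | z < (n : ℝ) ^ ((1/4 : ℝ)) - Real.sqrt n * θ}) := by
  set γ := gaussianReal 0 1 with hγ
  set g : ℝ → ℝ≥0∞ := fun θ =>
    (∫⁻ z in Set.Ici ((n : ℝ) ^ ((1/4 : ℝ)) - Real.sqrt n * θ),
        ENNReal.ofReal (z ^ 2) ∂γ)
      + ENNReal.ofReal ((n : ℝ) * θ ^ 2)
          * γ {z : ℝ | z < (n : ℝ) ^ ((1/4 : ℝ)) - Real.sqrt n * θ} with hgdef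
  set r : ℝ → ℝ≥0∞ := fun θ =>
    (n : ℝ≥0∞) *
      ∫⁻ x, ENNReal.ofReal
          ((max (if (n : ℝ) ^ (-(1/4 : ℝ)) ≤ |(∑ i, x i) / (n : ℝ)|
                  then (∑ i, x i) / (n : ℝ) else 0) 0
            - max θ 0) ^ 2)
        ∂(Measure.pi fun _ : Fin n => gaussianReal θ 1) with hrdef
  have hr' : ∀ θ : ℝ, r θ = (n : ℝ≥0∞) * ∫⁻ z, F n θ (θ + z / Real.sqrt n) ∂γ := by
    intro θ
    rw [hrdef]
    exact congrArg _ (risk_transfer n hn θ)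
  have hfg : ∀ θ : ℝ, 0 ≤ θ → r θ = g θ := fun θ hθ => by
    rw [hr', risk_eval n hn θ hθ]
  have hg0 : g 0 = ∫⁻ z in Set.Ici ((n : ℝ) ^ ((1/4 : ℝ))), ENNReal.ofReal (z ^ 2) ∂γ := by
    rw [hgdef]
    norm_num
  have key1 : ∀ θ : ℝ, θ ∈ {θ : ℝ | |θ| < δ} →
      r θ ≤ ⨆ θ ∈ Set.Ico (0:ℝ) δ, g θ := by
    intro θ hθ
    have hθ' : |θ| < δ := hθ
    rcases le_or_gt 0 θ with h0 | h0
    · rw [hfg θ h0]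
      exact le_iSup₂ (f := fun (θ : ℝ) (_ : θ ∈ Set.Ico (0:ℝ) δ) => g θ) θ
        ⟨h0, lt_of_abs_lt hθ'⟩
    · calc r θ ≤ ∫⁻ z in Set.Ici ((n : ℝ) ^ ((1/4 : ℝ))), ENNReal.ofReal (z ^ 2) ∂γ := by
            rw [hr']
            exact risk_le n hn θ h0
        _ = g 0 := hg0.symm
        _ ≤ _ := le_iSup₂ (f := fun (θ : ℝ) (_ : θ ∈ Set.Ico (0:ℝ) δ) => g θ) 0
            ⟨le_refl 0, hδ⟩
  have key2 : ∀ θ : ℝ, θ ∈ Set.Ico (0:ℝ) δ →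
      g θ ≤ ⨆ θ ∈ {θ : ℝ | |θ| < δ}, r θ := by
    intro θ hθ
    rw [← hfg θ hθ.1]
    exact le_iSup₂ (f := fun (θ : ℝ) (_ : θ ∈ {θ : ℝ | |θ| < δ}) => r θ) θ
      (show |θ| < δ by rw [abs_of_nonneg hθ.1]; exact hθ.2)
  exact le_antisymm (iSup₂_le key1) (iSup₂_le key2)
end

section
/- Exact decomposition of the squared Hellinger distance between shifted mixtures (identity established in the proof of Lemma E.4 of the paper's supplement). Let ν be a σ-finite measure on (𝒳,𝒜) and let t ↦ P_t be a Markov kernel from ℝ^d to 𝒳 such that every P_t has density p(t,·) with respect to ν, with (t,x) ↦ p(t,x) jointly measurable. Let Q be a probability measure on ℝ^d with Lebesgue density q, let h ∈ ℝ^d, and let Q_h denote the probability measure with density t ↦ q(t+h). Let 𝔓₀ be the measure on 𝒳 × ℝ^d with density (x,t) ↦ p(t,x)·q(t) with respect to ν ⊗ Lebesgue, and 𝔓_h the measure with density (x,t) ↦ p(t+h,x)·q(t+h). Then H²(𝔓₀, 𝔓_h) = H²(Q, Q_h) + ∫_{ℝ^d} √(q(t)·q(t+h)) · H²(P_t, P_{t+h})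 dt. -/
open MeasureTheory ProbabilityTheory ENNReal

/-- The squared Hellinger distance `H²(P, P')`, computed with the common dominating
measure `P + P'`; it does not depend on the choice of dominating measure. -/
noncomputable def hellingerSq {α : Type*} [MeasurableSpace α] (P P' : Measure α) : ℝ :=
  ∫ x, (Real.sqrt ((P.rnDeriv (P + P')) x).toReal
        - Real.sqrt ((P'.rnDeriv (P + P')) x).toReal) ^ 2 ∂(P + P')

lemma hellingerSq_eq_integral_rnDeriv {α : Type*} [MeasurableSpace α]
    (P P' μ : Measure α) [IsFiniteMeasure P] [IsFiniteMeasure P'] [SigmaFinite μ]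
    (hP : P ≪ μ) (hP' : P' ≪ μ) :
    hellingerSq P P'
      = ∫ x, (Real.sqrt ((P.rnDeriv μ) x).toReal
            - Real.sqrt ((P'.rnDeriv μ) x).toReal) ^ 2 ∂μ := by
  have hσμ : P + P' ≪ μ := hP.add_left hP'
  have hPσ : P ≪ P + P' := by
    intro s hs
    simp only [Measure.add_apply, add_eq_zero] at hs
    exact hs.1
  have hP'σ : P' ≪ P + P' := by
    intro s hs
    simp only [Measure.add_apply, add_eq_zero] at hs
    exact hs.2
  rw [hellingerSq, ← MeasureTheory.integral_rnDeriv_smul hσμ]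
  refine integral_congr_ae ?_
  filter_upwards [Measure.rnDeriv_lt_top (P + P') μ,
    Measure.rnDeriv_mul_rnDeriv hPσ (κ := μ),
    Measure.rnDeriv_mul_rnDeriv hP'σ (κ := μ),
    Measure.rnDeriv_lt_top P μ, Measure.rnDeriv_lt_top P' μ] with x hw hc hc' hf hf'
  simp only [Pi.mul_apply] at hc hc'
  set a := P.rnDeriv (P + P') x
  set b := P'.rnDeriv (P + P') x
  set w := (P + P').rnDeriv μ x
  rcases eq_or_ne w 0 with hw0 | hw0
  · rw [← hc, ← hc', hw0, mul_zero, mul_zero]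
    simp
  · have ha : a ≠ ∞ := by
      intro h
      rw [← hc, h, ENNReal.top_mul hw0] at hf
      exact (lt_irrefl _ hf).elim
    have hb : b ≠ ∞ := by
      intro h
      rw [← hc', h, ENNReal.top_mul hw0] at hf'
      exact (lt_irrefl _ hf').elim
    rw [← hc, ← hc', ENNReal.toReal_mul, ENNReal.toReal_mul,
      Real.sqrt_mul ENNReal.toReal_nonneg, Real.sqrt_mul ENNReal.toReal_nonneg]
    have hws : Real.sqrt w.toReal ^ 2 = w.toReal := Real.sq_sqrt ENNReal.toReal_nonneg
    rw [smul_eq_mul]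
    nlinarith [hws]

lemma hellingerSq_withDensity {α : Type*} [MeasurableSpace α]
    (μ : Measure α) [SigmaFinite μ] (f g : α → ℝ)
    (hf : Measurable f) (hg : Measurable g)
    (hf0 : ∀ x, 0 ≤ f x) (hg0 : ∀ x, 0 ≤ g x)
    (hfi : ∫⁻ x, ENNReal.ofReal (f x) ∂μ ≠ ∞)
    (hgi : ∫⁻ x, ENNReal.ofReal (g x) ∂μ ≠ ∞) :
    hellingerSq (μ.withDensity fun x => ENNReal.ofReal (f x))
        (μ.withDensity fun x => ENNReal.ofReal (g x))
      = ∫ x, (Real.sqrt (f x) - Real.sqrt (g x)) ^ 2 ∂μ := by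
  haveI : IsFiniteMeasure (μ.withDensity fun x => ENNReal.ofReal (f x)) :=
    isFiniteMeasure_withDensity hfi
  haveI : IsFiniteMeasure (μ.withDensity fun x => ENNReal.ofReal (g x)) :=
    isFiniteMeasure_withDensity hgi
  rw [hellingerSq_eq_integral_rnDeriv _ _ μ
    (withDensity_absolutelyContinuous _ _) (withDensity_absolutelyContinuous _ _)]
  refine integral_congr_ae ?_
  filter_upwards [Measure.rnDeriv_withDensity μ (hf.ennreal_ofReal),
    Measure.rnDeriv_withDensity μ (hg.ennreal_ofReal)] with x h1 h2
  rw [h1, h2, ENNReal.toReal_ofReal (hf0 x), ENNReal.toReal_ofReal (hg0 x)]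

-- integrable of nonneg function with finite lintegral
lemma integrable_of_ofReal_lintegral {α : Type*} [MeasurableSpace α] {μ : Measure α}
    {f : α → ℝ} (hf : Measurable f) (hf0 : ∀ x, 0 ≤ f x)
    (hfi : ∫⁻ x, ENNReal.ofReal (f x) ∂μ ≠ ∞) : Integrable f μ := by
  have := integrable_toReal_of_lintegral_ne_top (hf.ennreal_ofReal).aemeasurable hfi
  refine this.congr (Filter.Eventually.of_forall fun x => ?_)
  exact ENNReal.toReal_ofReal (hf0 x)

lemma integral_eq_one_of_lintegral {α : Type*} [MeasurableSpace α] {μ : Measure α}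
    {f : α → ℝ} (hf : Measurable f) (hf0 : ∀ x, 0 ≤ f x)
    (hfi : ∫⁻ x, ENNReal.ofReal (f x) ∂μ = 1) : ∫ x, f x ∂μ = 1 := by
  rw [integral_eq_lintegral_of_nonneg_ae (Filter.Eventually.of_forall hf0)
    hf.aestronglyMeasurable, hfi]
  simp

/-- Key pointwise-in-`t` identity. -/
lemma hellinger_inner {α : Type*} [MeasurableSpace α] (ν : Measure α)
    (a b : α → ℝ) (ha : Measurable a) (hb : Measurable b)
    (ha0 : ∀ x, 0 ≤ a x) (hb0 : ∀ x, 0 ≤ b x)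
    (hai : ∫⁻ x, ENNReal.ofReal (a x) ∂ν = 1)
    (hbi : ∫⁻ x, ENNReal.ofReal (b x) ∂ν = 1)
    (c e : ℝ) (hc : 0 ≤ c) (he : 0 ≤ e) :
    ∫ x, (Real.sqrt (a x * c) - Real.sqrt (b x * e)) ^ 2 ∂ν
      = (Real.sqrt c - Real.sqrt e) ^ 2
        + Real.sqrt (c * e) * ∫ x, (Real.sqrt (a x) - Real.sqrt (b x)) ^ 2 ∂ν := by
  have haI : Integrable a ν := integrable_of_ofReal_lintegral ha ha0 (by rw [hai]; simp)
  have hbI : Integrable b ν := integrable_of_ofReal_lintegral hb hb0 (by rw [hbi]; simp)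
  have habI : Integrable (fun x => Real.sqrt (a x) * Real.sqrt (b x)) ν := by
    refine Integrable.mono' (haI.add hbI)
      ((ha.sqrt.mul hb.sqrt).aestronglyMeasurable)
      (Filter.Eventually.of_forall fun x => ?_)
    have h1 : 0 ≤ Real.sqrt (a x) * Real.sqrt (b x) :=
      mul_nonneg (Real.sqrt_nonneg _) (Real.sqrt_nonneg _)
    rw [Real.norm_of_nonneg h1, Pi.add_apply]
    nlinarith [Real.sq_sqrt (ha0 x), Real.sq_sqrt (hb0 x),
      sq_nonneg (Real.sqrt (a x) - Real.sqrt (b x))]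
  have hIa : ∫ x, a x ∂ν = 1 := integral_eq_one_of_lintegral ha ha0 hai
  have hIb : ∫ x, b x ∂ν = 1 := integral_eq_one_of_lintegral hb hb0 hbi
  set K := ∫ x, Real.sqrt (a x) * Real.sqrt (b x) ∂ν with hK
  have hleft : ∫ x, (Real.sqrt (a x * c) - Real.sqrt (b x * e)) ^ 2 ∂ν
      = c * 1 + e * 1 - Real.sqrt c * Real.sqrt e * (2 * K) := by
    have hpt : ∀ x, (Real.sqrt (a x * c) - Real.sqrt (b x * e)) ^ 2
        = c * a x + e * b x
          - Real.sqrt c * Real.sqrt e * (2 * (Real.sqrt (a x) * Real.sqrt (b x))) := by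
      intro x
      rw [Real.sqrt_mul (ha0 x), Real.sqrt_mul (hb0 x)]
      have h1 := Real.sq_sqrt (ha0 x)
      have h2 := Real.sq_sqrt (hb0 x)
      have h3 := Real.sq_sqrt hc
      have h4 := Real.sq_sqrt he
      ring_nf
      nlinarith [h1, h2, h3, h4]
    simp_rw [hpt]
    have hF : Integrable (fun x => c * a x + e * b x) ν := (haI.const_mul c).add (hbI.const_mul e)
    have hG : Integrable (fun x => Real.sqrt c * Real.sqrt e * (2 * (Real.sqrt (a x) * Real.sqrt (b x)))) ν :=
      (habI.const_mul 2).const_mul _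
    rw [integral_sub hF hG, integral_add (haI.const_mul c) (hbI.const_mul e),
      integral_const_mul c, integral_const_mul e, integral_const_mul, integral_const_mul,
      hIa, hIb, hK]
  have hright : ∫ x, (Real.sqrt (a x) - Real.sqrt (b x)) ^ 2 ∂ν = 1 + 1 - 2 * K := by
    have hpt : ∀ x, (Real.sqrt (a x) - Real.sqrt (b x)) ^ 2
        = a x + b x - 2 * (Real.sqrt (a x) * Real.sqrt (b x)) := by
      intro x
      have h1 := Real.sq_sqrt (ha0 x)
      have h2 := Real.sq_sqrt (hb0 x)
      nlinarith [h1, h2]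
    simp_rw [hpt]
    have hF : Integrable (fun x => a x + b x) ν := haI.add hbI
    rw [integral_sub hF (habI.const_mul 2), integral_add haI hbI,
      integral_const_mul, hIa, hIb, hK]
  rw [hleft, hright, Real.sqrt_mul hc]
  have h3 := Real.sq_sqrt hc
  have h4 := Real.sq_sqrt he
  nlinarith [h3, h4]

/-- **Exact decomposition of the squared Hellinger distance between shifted mixtures
(identity from the proof of Lemma E.4).** -/
theorem hellinger_mixture_decomposition
    {𝒳 : Type*} [MeasurableSpace 𝒳] (d : ℕ)
    (ν : Measure 𝒳) [SigmaFinite ν]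
    (κ : Kernel (Fin d → ℝ) 𝒳) [IsMarkovKernel κ]
    -- densities of the kernel with respect to `ν`
    (p : (Fin d → ℝ) → 𝒳 → ℝ)
    (hp_meas : Measurable (Function.uncurry p))
    (hp_nonneg : ∀ t x, 0 ≤ p t x)
    (hκ : ∀ t, κ t = ν.withDensity fun x => ENNReal.ofReal (p t x))
    -- a probability measure `Q` on `ℝ^d` with Lebesgue density `q`
    (q : (Fin d → ℝ) → ℝ) (hq_meas : Measurable q) (hq_nonneg : ∀ t, 0 ≤ q t)
    (Q : Measure (Fin d → ℝ)) [IsProbabilityMeasure Q]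
    (hQ : Q = volume.withDensity fun t => ENNReal.ofReal (q t))
    (h : Fin d → ℝ) :
    hellingerSq
        ((ν.prod volume).withDensity fun z : 𝒳 × (Fin d → ℝ) =>
          ENNReal.ofReal (p z.2 z.1 * q z.2))
        ((ν.prod volume).withDensity fun z : 𝒳 × (Fin d → ℝ) =>
          ENNReal.ofReal (p (z.2 + h) z.1 * q (z.2 + h)))
      = hellingerSq Q (volume.withDensity fun t => ENNReal.ofReal (q (t + h)))
        + ∫ t : Fin d → ℝ,
            Real.sqrt (q t * q (t + h)) * hellingerSq (κ t) (κ (t + h)) := by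
  -- basic measurability facts
  have hth : Measurable fun t : Fin d → ℝ => t + h := measurable_id.add_const h
  have hq'_meas : Measurable fun t => q (t + h) := hq_meas.comp hth
  have hp_t : ∀ t, Measurable (p t) := fun t => hp_meas.comp measurable_prodMk_left
  have hP1 : Measurable fun z : 𝒳 × (Fin d → ℝ) => p z.2 z.1 :=
    hp_meas.comp (measurable_snd.prodMk measurable_fst)
  have hP1' : Measurable fun z : 𝒳 × (Fin d → ℝ) => p (z.2 + h) z.1 :=
    hp_meas.comp ((measurable_snd.add_const h).prodMk measurable_fst)
  have hD : Measurable fun z : 𝒳 × (Fin d → ℝ) => p z.2 z.1 * q z.2 :=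
    hP1.mul (hq_meas.comp measurable_snd)
  have hD' : Measurable fun z : 𝒳 × (Fin d → ℝ) => p (z.2 + h) z.1 * q (z.2 + h) :=
    hP1'.mul (hq_meas.comp (measurable_snd.add_const h))
  -- basic lintegral facts
  have hq1 : ∫⁻ t, ENNReal.ofReal (q t) = 1 := by
    have := measure_univ (μ := Q)
    rw [hQ, withDensity_apply _ MeasurableSet.univ, setLIntegral_univ] at this
    exact this
  have hq'1 : ∫⁻ t, ENNReal.ofReal (q (t + h)) = 1 := by
    rw [(measurePreserving_add_right (volume : Measure (Fin d → ℝ)) h).lintegral_comp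
      hq_meas.ennreal_ofReal]
    exact hq1
  have hp1 : ∀ t, ∫⁻ x, ENNReal.ofReal (p t x) ∂ν = 1 := by
    intro t
    have := measure_univ (μ := κ t)
    rw [hκ t, withDensity_apply _ MeasurableSet.univ, setLIntegral_univ] at this
    exact this
  have hprod : ∀ (s : (Fin d → ℝ) → (Fin d → ℝ)), Measurable s →
      (∀ t, ∫⁻ x, ENNReal.ofReal (p (s t) x) ∂ν = 1) →
      (∫⁻ t, ENNReal.ofReal (q (s t)) = 1) →
      ∫⁻ z : 𝒳 × (Fin d → ℝ), ENNReal.ofReal (p (s z.2) z.1 * q (s z.2)) ∂(ν.prod volume)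
        = 1 := by
    intro s hs hps hqs
    have hmeas : Measurable fun z : 𝒳 × (Fin d → ℝ) =>
        ENNReal.ofReal (p (s z.2) z.1) * ENNReal.ofReal (q (s z.2)) :=
      ((hp_meas.comp ((hs.comp measurable_snd).prodMk measurable_fst)).ennreal_ofReal).mul
        ((hq_meas.comp (hs.comp measurable_snd)).ennreal_ofReal)
    calc ∫⁻ z : 𝒳 × (Fin d → ℝ), ENNReal.ofReal (p (s z.2) z.1 * q (s z.2)) ∂(ν.prod volume)
        = ∫⁻ z : 𝒳 × (Fin d → ℝ),
            ENNReal.ofReal (p (s z.2) z.1) * ENNReal.ofReal (q (s z.2)) ∂(ν.prod volume) := by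
          simp_rw [← ENNReal.ofReal_mul (hp_nonneg _ _)]
      _ = ∫⁻ t, ∫⁻ x, ENNReal.ofReal (p (s t) x) * ENNReal.ofReal (q (s t)) ∂ν := by
          rw [lintegral_prod_symm _ hmeas.aemeasurable]
      _ = ∫⁻ t, ENNReal.ofReal (q (s t)) := by
          refine lintegral_congr fun t => ?_
          rw [lintegral_mul_const _ ((hp_t (s t)).ennreal_ofReal), hps t, one_mul]
      _ = 1 := hqs
  have hprod1 : ∫⁻ z : 𝒳 × (Fin d → ℝ), ENNReal.ofReal (p z.2 z.1 * q z.2) ∂(ν.prod volume)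
      = 1 := hprod id measurable_id hp1 hq1
  have hprod1' : ∫⁻ z : 𝒳 × (Fin d → ℝ),
      ENNReal.ofReal (p (z.2 + h) z.1 * q (z.2 + h)) ∂(ν.prod volume)
      = 1 := hprod (fun t => t + h) hth (fun t => hp1 (t + h)) hq'1
  -- rewrite the three Hellinger distances
  rw [hQ, hellingerSq_withDensity volume q (fun t => q (t + h)) hq_meas hq'_meas hq_nonneg
    (fun t => hq_nonneg _) (by rw [hq1]; exact one_ne_top) (by rw [hq'1]; exact one_ne_top),
    hellingerSq_withDensity (ν.prod volume)
      (fun z : 𝒳 × (Fin d → ℝ) => p z.2 z.1 * q z.2)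
      (fun z : 𝒳 × (Fin d → ℝ) => p (z.2 + h) z.1 * q (z.2 + h)) hD hD'
      (fun z => mul_nonneg (hp_nonneg _ _) (hq_nonneg _))
      (fun z => mul_nonneg (hp_nonneg _ _) (hq_nonneg _))
      (by rw [hprod1]; exact one_ne_top) (by rw [hprod1']; exact one_ne_top)]
  have hκH : ∀ t : Fin d → ℝ, hellingerSq (κ t) (κ (t + h))
      = ∫ x, (Real.sqrt (p t x) - Real.sqrt (p (t + h) x)) ^ 2 ∂ν := by
    intro t
    rw [hκ t, hκ (t + h)]
    exact hellingerSq_withDensity ν (p t) (p (t + h)) (hp_t t) (hp_t (t + h))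
      (hp_nonneg t) (hp_nonneg (t + h))
      (by rw [hp1 t]; exact one_ne_top) (by rw [hp1 (t + h)]; exact one_ne_top)
  simp only [hκH]
  -- integrability on the product space
  have hDI : Integrable (fun z : 𝒳 × (Fin d → ℝ) => p z.2 z.1 * q z.2) (ν.prod volume) :=
    integrable_of_ofReal_lintegral hD (fun z => mul_nonneg (hp_nonneg _ _) (hq_nonneg _))
      (by rw [hprod1]; exact one_ne_top)
  have hD'I : Integrable (fun z : 𝒳 × (Fin d → ℝ) => p (z.2 + h) z.1 * q (z.2 + h))
      (ν.prod volume) :=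
    integrable_of_ofReal_lintegral hD' (fun z => mul_nonneg (hp_nonneg _ _) (hq_nonneg _))
      (by rw [hprod1']; exact one_ne_top)
  set G : 𝒳 × (Fin d → ℝ) → ℝ := fun z =>
    (Real.sqrt (p z.2 z.1 * q z.2) - Real.sqrt (p (z.2 + h) z.1 * q (z.2 + h))) ^ 2 with hGdef
  have hG_meas : Measurable G := (hD.sqrt.sub hD'.sqrt).pow_const 2
  have hGI : Integrable G (ν.prod volume) := by
    refine Integrable.mono' ((hDI.add hD'I).const_mul 2) hG_meas.aestronglyMeasurable
      (Filter.Eventually.of_forall fun z => ?_)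
    rw [Real.norm_of_nonneg (sq_nonneg _)]
    have h1 := Real.sq_sqrt (mul_nonneg (hp_nonneg z.2 z.1) (hq_nonneg z.2))
    have h2 := Real.sq_sqrt (mul_nonneg (hp_nonneg (z.2 + h) z.1) (hq_nonneg (z.2 + h)))
    simp only [hGdef, Pi.add_apply]
    nlinarith [sq_nonneg (Real.sqrt (p z.2 z.1 * q z.2)
      + Real.sqrt (p (z.2 + h) z.1 * q (z.2 + h)))]
  -- express LHS as an iterated integral with the `t` variable outside
  have hswap : ∫ z, G z ∂(ν.prod volume) = ∫ t, ∫ x, G (x, t) ∂ν := by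
    rw [integral_prod _ hGI]
    exact integral_integral_swap hGI
  -- pointwise-in-`t` decomposition
  have hpt : ∀ t : Fin d → ℝ, ∫ x, G (x, t) ∂ν
      = (Real.sqrt (q t) - Real.sqrt (q (t + h))) ^ 2
        + Real.sqrt (q t * q (t + h))
          * ∫ x, (Real.sqrt (p t x) - Real.sqrt (p (t + h) x)) ^ 2 ∂ν := by
    intro t
    exact hellinger_inner ν (p t) (p (t + h)) (hp_t t) (hp_t (t + h))
      (hp_nonneg t) (hp_nonneg (t + h)) (hp1 t) (hp1 (t + h))
      (q t) (q (t + h)) (hq_nonneg t) (hq_nonneg _)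
  -- integrability of the two pieces in `t`
  have hqI : Integrable q volume :=
    integrable_of_ofReal_lintegral hq_meas hq_nonneg (by rw [hq1]; exact one_ne_top)
  have hq'I : Integrable (fun t => q (t + h)) volume :=
    integrable_of_ofReal_lintegral hq'_meas (fun t => hq_nonneg _)
      (by rw [hq'1]; exact one_ne_top)
  have IntA : Integrable (fun t => (Real.sqrt (q t) - Real.sqrt (q (t + h))) ^ 2) volume := by
    refine Integrable.mono' ((hqI.add hq'I).const_mul 2)
      ((hq_meas.sqrt.sub hq'_meas.sqrt).pow_const 2).aestronglyMeasurable
      (Filter.Eventually.of_forall fun t => ?_)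
    rw [Real.norm_of_nonneg (sq_nonneg _)]
    have h1 := Real.sq_sqrt (hq_nonneg t)
    have h2 := Real.sq_sqrt (hq_nonneg (t + h))
    simp only [Pi.add_apply]
    nlinarith [sq_nonneg (Real.sqrt (q t) + Real.sqrt (q (t + h)))]
  -- the Hellinger integrand in x
  have hpI : ∀ t, Integrable (p t) ν := fun t =>
    integrable_of_ofReal_lintegral (hp_t t) (hp_nonneg t) (by rw [hp1 t]; exact one_ne_top)
  have hH_nonneg : ∀ t, 0 ≤ ∫ x, (Real.sqrt (p t x) - Real.sqrt (p (t + h) x)) ^ 2 ∂ν :=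
    fun t => integral_nonneg fun x => sq_nonneg _
  have hH_le : ∀ t, ∫ x, (Real.sqrt (p t x) - Real.sqrt (p (t + h) x)) ^ 2 ∂ν ≤ 2 := by
    intro t
    have hbound : ∀ x, (Real.sqrt (p t x) - Real.sqrt (p (t + h) x)) ^ 2
        ≤ p t x + p (t + h) x := by
      intro x
      have h1 := Real.sq_sqrt (hp_nonneg t x)
      have h2 := Real.sq_sqrt (hp_nonneg (t + h) x)
      nlinarith [mul_nonneg (Real.sqrt_nonneg (p t x)) (Real.sqrt_nonneg (p (t + h) x))]
    have hint : Integrable (fun x => (Real.sqrt (p t x) - Real.sqrt (p (t + h) x)) ^ 2) ν := by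
      refine Integrable.mono' ((hpI t).add (hpI (t + h)))
        (((hp_t t).sqrt.sub (hp_t (t + h)).sqrt).pow_const 2).aestronglyMeasurable
        (Filter.Eventually.of_forall fun x => ?_)
      rw [Real.norm_of_nonneg (sq_nonneg _)]
      exact hbound x
    calc ∫ x, (Real.sqrt (p t x) - Real.sqrt (p (t + h) x)) ^ 2 ∂ν
        ≤ ∫ x, (p t x + p (t + h) x) ∂ν :=
          integral_mono hint ((hpI t).add (hpI (t + h))) hbound
      _ = 2 := by
          rw [integral_add (hpI t) (hpI (t + h))]
          have hIa : ∫ x, p t x ∂ν = 1 := by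
            rw [integral_eq_lintegral_of_nonneg_ae (Filter.Eventually.of_forall (hp_nonneg t))
              (hp_t t).aestronglyMeasurable, hp1 t]
            simp
          have hIb : ∫ x, p (t + h) x ∂ν = 1 := by
            rw [integral_eq_lintegral_of_nonneg_ae
              (Filter.Eventually.of_forall (hp_nonneg (t + h)))
              (hp_t (t + h)).aestronglyMeasurable, hp1 (t + h)]
            simp
          rw [hIa, hIb]; norm_num
  have hH_meas : StronglyMeasurable fun t : Fin d → ℝ =>
      ∫ x, (Real.sqrt (p t x) - Real.sqrt (p (t + h) x)) ^ 2 ∂ν := by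
    have : StronglyMeasurable fun z : 𝒳 × (Fin d → ℝ) =>
        (Real.sqrt (p z.2 z.1) - Real.sqrt (p (z.2 + h) z.1)) ^ 2 :=
      ((hP1.sqrt.sub hP1'.sqrt).pow_const 2).stronglyMeasurable
    exact this.integral_prod_left'
  have IntB : Integrable (fun t => Real.sqrt (q t * q (t + h))
      * ∫ x, (Real.sqrt (p t x) - Real.sqrt (p (t + h) x)) ^ 2 ∂ν) volume := by
    refine Integrable.mono' (hqI.add hq'I)
      (((hq_meas.mul hq'_meas).sqrt.stronglyMeasurable.mul hH_meas).aestronglyMeasurable)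
      (Filter.Eventually.of_forall fun t => ?_)
    have h0 : 0 ≤ Real.sqrt (q t * q (t + h))
        * ∫ x, (Real.sqrt (p t x) - Real.sqrt (p (t + h) x)) ^ 2 ∂ν :=
      mul_nonneg (Real.sqrt_nonneg _) (hH_nonneg t)
    rw [Real.norm_of_nonneg h0]
    have h1 : Real.sqrt (q t * q (t + h)) * 2 ≤ q t + q (t + h) := by
      rw [Real.sqrt_mul (hq_nonneg t)]
      have h2 := Real.sq_sqrt (hq_nonneg t)
      have h3 := Real.sq_sqrt (hq_nonneg (t + h))
      nlinarith [sq_nonneg (Real.sqrt (q t) - Real.sqrt (q (t + h)))]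
    have h4 : Real.sqrt (q t * q (t + h))
        * ∫ x, (Real.sqrt (p t x) - Real.sqrt (p (t + h) x)) ^ 2 ∂ν
        ≤ Real.sqrt (q t * q (t + h)) * 2 :=
      mul_le_mul_of_nonneg_left (hH_le t) (Real.sqrt_nonneg _)
    simpa only [Pi.add_apply] using h4.trans h1
  -- put everything together
  calc ∫ z, G z ∂(ν.prod volume)
      = ∫ t, ∫ x, G (x, t) ∂ν := hswap
    _ = ∫ t, ((Real.sqrt (q t) - Real.sqrt (q (t + h))) ^ 2
        + Real.sqrt (q t * q (t + h))
          * ∫ x, (Real.sqrt (p t x) - Real.sqrt (p (t + h) x)) ^ 2 ∂ν) := by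
        exact integral_congr_ae (Filter.Eventually.of_forall hpt)
    _ = (∫ t, (Real.sqrt (q t) - Real.sqrt (q (t + h))) ^ 2)
        + ∫ t, Real.sqrt (q t * q (t + h))
          * ∫ x, (Real.sqrt (p t x) - Real.sqrt (p (t + h) x)) ^ 2 ∂ν :=
        integral_add IntA IntB
end

section
/- Key Cauchy–Schwarz estimate for the mixture Hellinger bound (inequality (eq:vt_cauchy_schwarz_hellinger) in the proof of Theorem 3.5 of the paper). Let θ ↦ P_θ be a Markov kernel from ℝ^d to (𝒳,𝒜), Q a probability measure on ℝ^d, h ∈ ℝ^d, ψ : ℝ^d → ℝ^k measurable with t ↦ ψ(t) − ψ(t−h) Q-integrable, ‖·‖ a norm on ℝ^k, and T : 𝒳 → ℝ^k measurable. With the mixture measures ℙ₀ and ℙ_h on 𝒳 × ℝ^d, assume R₀ := ∫ ‖T(x) − ψ(θ)‖² dℙ₀(x,θ) < ∞ and R_h := ∫ ‖T(x) − ψ(θ)‖² dℙ_h(x,θ) < ∞. Then ‖∫_{ℝ^d} (ψ(t) − ψ(t−h)) dQ(t)‖² ≤ 2·(R₀ + R_h)·H²(ℙ₀, ℙ_h).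 -/
open MeasureTheory ProbabilityTheory ENNReal

section NormAux
variable {k : ℕ} {N : (Fin k → ℝ) → ℝ}

lemma N_zero (hN_smul : ∀ (c : ℝ) (x), N (c • x) = |c| * N x) : N 0 = 0 := by
  have := hN_smul 0 0; simpa using this

lemma N_neg (hN_smul : ∀ (c : ℝ) (x), N (c • x) = |c| * N x) (x : Fin k → ℝ) :
    N (-x) = N x := by
  have := hN_smul (-1) x; simpa using this

lemma N_nonneg (hN_add : ∀ x y, N (x + y) ≤ N x + N y)
    (hN_smul : ∀ (c : ℝ) (x), N (c • x) = |c| * N x) (x : Fin k → ℝ) : 0 ≤ N x := by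
  have h1 := hN_add x (-x)
  have h2 := N_neg hN_smul x
  have h3 := N_zero hN_smul
  simp only [add_neg_cancel] at h1
  linarith

lemma N_sum (hN_add : ∀ x y, N (x + y) ≤ N x + N y)
    (hN_smul : ∀ (c : ℝ) (x), N (c • x) = |c| * N x)
    {ι : Type*} (s : Finset ι) (f : ι → (Fin k → ℝ)) :
    N (∑ i ∈ s, f i) ≤ ∑ i ∈ s, N (f i) := by
  classical
  induction s using Finset.induction_on with
  | empty => simp [N_zero hN_smul]
  | insert _ _ hi ih =>
    rename_i a s
    rw [Finset.sum_insert hi, Finset.sum_insert hi]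
    exact (hN_add _ _).trans (by linarith)

lemma N_upper (hN_add : ∀ x y, N (x + y) ≤ N x + N y)
    (hN_smul : ∀ (c : ℝ) (x), N (c • x) = |c| * N x) :
    ∃ C : ℝ, 0 ≤ C ∧ ∀ x, N x ≤ C * ‖x‖ := by
  classical
  refine ⟨∑ i, N (Pi.single i 1), Finset.sum_nonneg fun i _ => N_nonneg hN_add hN_smul _, fun x => ?_⟩
  have hx : x = ∑ i, (x i) • (Pi.single i 1 : Fin k → ℝ) := by
    ext j; simp [Pi.single_apply, Finset.sum_ite_eq']
  calc N x = N (∑ i, (x i) • (Pi.single i 1 : Fin k → ℝ)) := by rw [← hx]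
    _ ≤ ∑ i, N ((x i) • (Pi.single i 1 : Fin k → ℝ)) := N_sum hN_add hN_smul _ _
    _ ≤ ∑ i, N (Pi.single i (1:ℝ)) * ‖x‖ := by
        refine Finset.sum_le_sum fun i _ => ?_
        rw [hN_smul]
        have h1 : |x i| ≤ ‖x‖ := by
          simpa using norm_le_pi_norm x i
        have := N_nonneg hN_add hN_smul (Pi.single i (1:ℝ))
        nlinarith [abs_nonneg (x i)]
    _ = (∑ i, N (Pi.single i 1)) * ‖x‖ := by rw [Finset.sum_mul]

lemma N_continuous (hN_add : ∀ x y, N (x + y) ≤ N x + N y)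
    (hN_smul : ∀ (c : ℝ) (x), N (c • x) = |c| * N x) : Continuous N := by
  obtain ⟨C, hC0, hC⟩ := N_upper hN_add hN_smul
  have key : ∀ x y : Fin k → ℝ, N x - N y ≤ C * ‖x - y‖ := by
    intro x y
    have h1 : N x ≤ N (x - y) + N y := by
      have := hN_add (x - y) y; simpa using this
    have := hC (x - y)
    linarith
  have : LipschitzWith (Real.toNNReal C) N := by
    refine LipschitzWith.of_dist_le_mul fun x y => ?_
    rw [Real.dist_eq, dist_eq_norm, abs_sub_le_iff]
    have h2 := key x y
    have h3 := key y x
    rw [← norm_neg (y - x), neg_sub] at h3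
    constructor <;> simp only [Real.coe_toNNReal C hC0] <;> [exact h2; exact h3]
  exact this.continuous

lemma N_lower (hN_add : ∀ x y, N (x + y) ≤ N x + N y)
    (hN_smul : ∀ (c : ℝ) (x), N (c • x) = |c| * N x)
    (hN_eq_zero : ∀ x, N x = 0 ↔ x = 0) :
    ∃ c : ℝ, 0 < c ∧ ∀ x, c * ‖x‖ ≤ N x := by
  by_cases hE : ∃ x : Fin k → ℝ, x ≠ 0
  · obtain ⟨x₀, hx₀⟩ := hE
    have hS : (Metric.sphere (0 : Fin k → ℝ) 1).Nonempty :=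
      ⟨‖x₀‖⁻¹ • x₀, by simp [norm_smul, norm_ne_zero_iff.2 hx₀, inv_mul_cancel₀]⟩
    obtain ⟨z, hz, hzmin⟩ := (isCompact_sphere (0 : Fin k → ℝ) 1).exists_isMinOn hS
      ((N_continuous hN_add hN_smul).continuousOn)
    have hz1 : ‖z‖ = 1 := by simpa using hz
    have hzne : z ≠ 0 := by intro hzz; rw [hzz] at hz1; simp at hz1
    have hm : 0 < N z := lt_of_le_of_ne (N_nonneg hN_add hN_smul z)
      (fun hc => hzne ((hN_eq_zero z).mp hc.symm))
    refine ⟨N z, hm, fun x => ?_⟩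
    by_cases hx : x = 0
    · simp [hx, N_zero hN_smul]
    · have hxn : (0:ℝ) < ‖x‖ := norm_pos_iff.2 hx
      have hu : (‖x‖⁻¹ • x) ∈ Metric.sphere (0 : Fin k → ℝ) 1 := by
        simp [norm_smul, abs_of_pos (inv_pos.2 hxn), inv_mul_cancel₀ hxn.ne']
      have h1 : N z ≤ N (‖x‖⁻¹ • x) := hzmin hu
      have h2 : N (‖x‖⁻¹ • x) = ‖x‖⁻¹ * N x := by
        rw [hN_smul, abs_of_pos (inv_pos.2 hxn)]
      rw [h2] at h1
      calc N z * ‖x‖ ≤ (‖x‖⁻¹ * N x) * ‖x‖ := by nlinarith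
        _ = N x := by field_simp
  · push_neg at hE
    exact ⟨1, one_pos, fun x => by simp [hE x, N_zero hN_smul]⟩

lemma N_convexOn (hN_add : ∀ x y, N (x + y) ≤ N x + N y)
    (hN_smul : ∀ (c : ℝ) (x), N (c • x) = |c| * N x) :
    ConvexOn ℝ Set.univ N := by
  refine ⟨convex_univ, fun x _ y _ a b ha hb _ => ?_⟩
  calc N (a • x + b • y) ≤ N (a • x) + N (b • y) := hN_add _ _
    _ = a * N x + b * N y := by rw [hN_smul, hN_smul, abs_of_nonneg ha, abs_of_nonneg hb]

lemma N_integrable (hN_add : ∀ x y, N (x + y) ≤ N x + N y)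
    (hN_smul : ∀ (c : ℝ) (x), N (c • x) = |c| * N x)
    {α : Type*} [MeasurableSpace α] {μ : Measure α} {g : α → Fin k → ℝ}
    (hg : Integrable g μ) : Integrable (fun a => N (g a)) μ := by
  obtain ⟨C, hC0, hC⟩ := N_upper hN_add hN_smul
  refine (hg.norm.const_mul C).mono
    (((N_continuous hN_add hN_smul).comp_aestronglyMeasurable hg.1)) ?_
  filter_upwards with a
  rw [Real.norm_eq_abs, abs_of_nonneg (N_nonneg hN_add hN_smul _), Real.norm_eq_abs,
    abs_of_nonneg (by positivity)]
  exact hC _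

lemma N_jensen (hN_add : ∀ x y, N (x + y) ≤ N x + N y)
    (hN_smul : ∀ (c : ℝ) (x), N (c • x) = |c| * N x)
    {α : Type*} [MeasurableSpace α] {μ : Measure α} [IsProbabilityMeasure μ]
    {g : α → Fin k → ℝ} (hg : Integrable g μ) :
    N (∫ a, g a ∂μ) ≤ ∫ a, N (g a) ∂μ := by
  exact (N_convexOn hN_add hN_smul).map_integral_le
    ((N_continuous hN_add hN_smul).continuousOn) isClosed_univ
    (Filter.Eventually.of_forall fun _ => Set.mem_univ _) hg
    (N_integrable hN_add hN_smul hg)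


lemma integrable_of_sq_lintegral {k : ℕ} {N : (Fin k → ℝ) → ℝ}
    (hN_add : ∀ x y, N (x + y) ≤ N x + N y)
    (hN_smul : ∀ (c : ℝ) (x), N (c • x) = |c| * N x)
    (hN_eq_zero : ∀ x, N x = 0 ↔ x = 0)
    {α : Type*} [MeasurableSpace α] (μ : Measure α) [IsProbabilityMeasure μ]
    {g : α → Fin k → ℝ} (hg : Measurable g)
    (hfin : (∫⁻ a, ENNReal.ofReal ((N (g a))^2) ∂μ) ≠ ⊤) :
    Integrable g μ ∧ Integrable (fun a => N (g a)) μ := by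
  have hNmeas : Measurable fun a => N (g a) :=
    (N_continuous hN_add hN_smul).measurable.comp hg
  have hNnn : ∀ a, 0 ≤ N (g a) := fun a => N_nonneg hN_add hN_smul _
  have hNint : Integrable (fun a => N (g a)) μ := by
    refine ⟨hNmeas.aestronglyMeasurable, ?_⟩
    rw [hasFiniteIntegral_iff_norm]
    have hle : ∀ a, ENNReal.ofReal ‖N (g a)‖ ≤ 1 + ENNReal.ofReal ((N (g a))^2) := by
      intro a
      rw [Real.norm_eq_abs, abs_of_nonneg (hNnn a)]
      have h1 : N (g a) ≤ 1 + (N (g a))^2 := by nlinarith [hNnn a]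
      calc ENNReal.ofReal (N (g a)) ≤ ENNReal.ofReal (1 + (N (g a))^2) :=
            ENNReal.ofReal_le_ofReal h1
        _ = 1 + ENNReal.ofReal ((N (g a))^2) := by
            rw [ENNReal.ofReal_add zero_le_one (sq_nonneg _), ENNReal.ofReal_one]
    calc ∫⁻ a, ENNReal.ofReal ‖N (g a)‖ ∂μ
        ≤ ∫⁻ a, (1 + ENNReal.ofReal ((N (g a))^2)) ∂μ := lintegral_mono hle
      _ = μ Set.univ + ∫⁻ a, ENNReal.ofReal ((N (g a))^2) ∂μ := by
          rw [lintegral_add_left measurable_const, lintegral_const, one_mul]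
      _ < ⊤ := by
          rw [measure_univ]
          exact ENNReal.add_lt_top.mpr ⟨ENNReal.one_lt_top, lt_top_iff_ne_top.mpr hfin⟩
  obtain ⟨c, hc0, hc⟩ := N_lower hN_add hN_smul hN_eq_zero
  refine ⟨?_, hNint⟩
  refine Integrable.mono' (hNint.const_mul c⁻¹) hg.aestronglyMeasurable ?_
  filter_upwards with a
  have := hc (g a)
  rw [inv_mul_eq_div, le_div_iff₀ hc0, mul_comm]
  exact this

end NormAux
/-- The mixture measure `ℙ₀` on `𝒳 × ℝ^d`: the law of `(X, θ)` with `θ ~ Q`, `X | θ ~ P_θ`. -/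
noncomputable def mixZero {𝒳 : Type*} [MeasurableSpace 𝒳] {d : ℕ}
    (κ : Kernel (Fin d → ℝ) 𝒳) (Q : Measure (Fin d → ℝ)) : Measure (𝒳 × (Fin d → ℝ)) :=
  (Q.compProd κ).map Prod.swap

/-- The shifted mixture measure `ℙ_h`, the image of `ℙ₀` under `(x, θ) ↦ (x, θ − h)`. -/
noncomputable def mixShift {𝒳 : Type*} [MeasurableSpace 𝒳] {d : ℕ}
    (κ : Kernel (Fin d → ℝ) 𝒳) (Q : Measure (Fin d → ℝ)) (h : Fin d → ℝ) :
    Measure (𝒳 × (Fin d → ℝ)) :=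
  (mixZero κ Q).map fun z => (z.1, z.2 - h)

/-- **Key Cauchy–Schwarz estimate for the mixture Hellinger bound
(inequality (eq:vt_cauchy_schwarz_hellinger) in the proof of Theorem 3.5).** -/
theorem mixture_hellinger_cauchy_schwarz
    {𝒳 : Type*} [MeasurableSpace 𝒳] (d k : ℕ)
    (κ : Kernel (Fin d → ℝ) 𝒳) [IsMarkovKernel κ]
    (Q : Measure (Fin d → ℝ)) [IsProbabilityMeasure Q]
    (h : Fin d → ℝ)
    (ψ : (Fin d → ℝ) → (Fin k → ℝ)) (hψ : Measurable ψ)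
    (hψint : Integrable (fun t => ψ t - ψ (t - h)) Q)
    -- an arbitrary norm `N` on `ℝ^k`
    (N : (Fin k → ℝ) → ℝ)
    (hN_add : ∀ x y, N (x + y) ≤ N x + N y)
    (hN_smul : ∀ (c : ℝ) (x), N (c • x) = |c| * N x)
    (hN_eq_zero : ∀ x, N x = 0 ↔ x = 0)
    (T : 𝒳 → (Fin k → ℝ)) (hT : Measurable T)
    (hR0 : (∫⁻ z : 𝒳 × (Fin d → ℝ),
        ENNReal.ofReal ((N (T z.1 - ψ z.2)) ^ 2) ∂(mixZero κ Q)) ≠ ⊤)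
    (hRh : (∫⁻ z : 𝒳 × (Fin d → ℝ),
        ENNReal.ofReal ((N (T z.1 - ψ z.2)) ^ 2) ∂(mixShift κ Q h)) ≠ ⊤) :
    ENNReal.ofReal ((N (∫ t, (ψ t - ψ (t - h)) ∂Q)) ^ 2)
      ≤ 2 * ((∫⁻ z : 𝒳 × (Fin d → ℝ),
              ENNReal.ofReal ((N (T z.1 - ψ z.2)) ^ 2) ∂(mixZero κ Q))
            + ∫⁻ z : 𝒳 × (Fin d → ℝ),
              ENNReal.ofReal ((N (T z.1 - ψ z.2)) ^ 2) ∂(mixShift κ Q h))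
          * ENNReal.ofReal (hellingerSq (mixZero κ Q) (mixShift κ Q h)) := by
  classical
  set P0 := mixZero κ Q with hP0def
  set Ph := mixShift κ Q h with hPhdef
  haveI hprob0 : IsProbabilityMeasure P0 := by
    rw [hP0def]; unfold mixZero
    exact Measure.isProbabilityMeasure_map measurable_swap.aemeasurable
  have hmeas_shift : Measurable (fun z : 𝒳 × (Fin d → ℝ) => (z.1, z.2 - h)) :=
    measurable_fst.prodMk (measurable_snd.sub measurable_const)
  haveI hprobh : IsProbabilityMeasure Ph := by
    rw [hPhdef]; unfold mixShift
    exact Measure.isProbabilityMeasure_map hmeas_shift.aemeasurable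
  set ν := P0 + Ph with hnudef
  have hac0 : P0 ≪ ν := by
    rw [hnudef]; exact Measure.absolutelyContinuous_of_le (Measure.le_add_right le_rfl)
  have hach : Ph ≪ ν := by
    rw [hnudef]; exact Measure.absolutelyContinuous_of_le (Measure.le_add_left le_rfl)
  set f : 𝒳 × (Fin d → ℝ) → (Fin k → ℝ) := fun z => T z.1 - ψ z.2 with hfdef
  have hfmeas : Measurable f := (hT.comp measurable_fst).sub (hψ.comp measurable_snd)
  have hR0' : (∫⁻ z, ENNReal.ofReal ((N (f z))^2) ∂P0) ≠ ⊤ := hR0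
  have hRh' : (∫⁻ z, ENNReal.ofReal ((N (f z))^2) ∂Ph) ≠ ⊤ := hRh
  obtain ⟨hint0, hNint0⟩ :=
    integrable_of_sq_lintegral hN_add hN_smul hN_eq_zero P0 hfmeas hR0'
  obtain ⟨hinth, hNinth⟩ :=
    integrable_of_sq_lintegral hN_add hN_smul hN_eq_zero Ph hfmeas hRh'
  -- Step B : the key identity
  have hmapPh : Ph = P0.map (fun z => (z.1, z.2 - h)) := rfl
  have hintPh_map : ∫ z, f z ∂Ph = ∫ z, f (z.1, z.2 - h) ∂P0 := by
    rw [hmapPh, integral_map hmeas_shift.aemeasurable]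
    exact hfmeas.aestronglyMeasurable
  have hint_shift : Integrable (fun z : 𝒳 × (Fin d → ℝ) => f (z.1, z.2 - h)) P0 := by
    rw [hmapPh] at hinth
    exact (integrable_map_measure hfmeas.aestronglyMeasurable
      hmeas_shift.aemeasurable).mp hinth
  have hsnd : P0.map Prod.snd = Q := by
    rw [hP0def]; unfold mixZero
    rw [Measure.map_map measurable_snd measurable_swap]
    have h1 : (Prod.snd ∘ Prod.swap : (Fin d → ℝ) × 𝒳 → (Fin d → ℝ)) = Prod.fst := rfl
    rw [h1]
    exact Measure.fst_compProd Q κ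
  have hpsi_m : Measurable (fun t : Fin d → ℝ => ψ t - ψ (t - h)) :=
    hψ.sub (hψ.comp (measurable_id.sub measurable_const))
  have hDelta : ∫ t, (ψ t - ψ (t - h)) ∂Q = ∫ z, f z ∂Ph - ∫ z, f z ∂P0 := by
    rw [hintPh_map, ← integral_sub hint_shift hint0]
    have h2 : ∀ z : 𝒳 × (Fin d → ℝ),
        f (z.1, z.2 - h) - f z = ψ z.2 - ψ (z.2 - h) := by
      intro z; simp only [hfdef]; abel
    rw [integral_congr_ae (Filter.Eventually.of_forall h2), ← hsnd,
      integral_map measurable_snd.aemeasurable]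
    exact hpsi_m.aestronglyMeasurable
  -- Step C : Radon-Nikodym representation
  set r : 𝒳 × (Fin d → ℝ) → ℝ := fun z => (P0.rnDeriv ν z).toReal with hrdef
  set r' : 𝒳 × (Fin d → ℝ) → ℝ := fun z => (Ph.rnDeriv ν z).toReal with hr'def
  have hrmeas : Measurable r := (Measure.measurable_rnDeriv _ _).ennreal_toReal
  have hr'meas : Measurable r' := (Measure.measurable_rnDeriv _ _).ennreal_toReal
  have hI0 : ∫ z, f z ∂P0 = ∫ z, r z • f z ∂ν :=
    (MeasureTheory.integral_rnDeriv_smul hac0).symm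
  have hIh : ∫ z, f z ∂Ph = ∫ z, r' z • f z ∂ν :=
    (MeasureTheory.integral_rnDeriv_smul hach).symm
  have hint_r : Integrable (fun z => r z • f z) ν :=
    (MeasureTheory.integrable_rnDeriv_smul_iff hac0).mpr hint0
  have hint_r' : Integrable (fun z => r' z • f z) ν :=
    (MeasureTheory.integrable_rnDeriv_smul_iff hach).mpr hinth
  set G : 𝒳 × (Fin d → ℝ) → (Fin k → ℝ) := fun z => (r' z - r z) • f z with hGdef
  have hGeq : G = fun z => r' z • f z - r z • f z := by
    funext z; simp only [hGdef, sub_smul]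
  have hintG : Integrable G ν := by rw [hGeq]; exact hint_r'.sub hint_r
  have hDelta2 : ∫ t, (ψ t - ψ (t - h)) ∂Q = ∫ z, G z ∂ν := by
    rw [hDelta, hI0, hIh, hGeq, integral_sub hint_r' hint_r]
  -- Step D : Jensen
  have hintG0 : Integrable G P0 := by
    rw [hnudef] at hintG; exact hintG.left_of_add_measure
  have hintGh : Integrable G Ph := by
    rw [hnudef] at hintG; exact hintG.right_of_add_measure
  have hJle : N (∫ z, G z ∂ν) ≤ ∫ z, N (G z) ∂ν := by
    rw [hnudef, integral_add_measure hintG0 hintGh,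
      integral_add_measure (N_integrable hN_add hN_smul hintG0)
        (N_integrable hN_add hN_smul hintGh)]
    calc N (∫ z, G z ∂P0 + ∫ z, G z ∂Ph)
        ≤ N (∫ z, G z ∂P0) + N (∫ z, G z ∂Ph) := hN_add _ _
      _ ≤ ∫ z, N (G z) ∂P0 + ∫ z, N (G z) ∂Ph :=
          add_le_add (N_jensen hN_add hN_smul hintG0) (N_jensen hN_add hN_smul hintGh)
  set J := ∫ z, N (G z) ∂ν with hJdef
  have hJ0 : 0 ≤ J := integral_nonneg fun z => N_nonneg hN_add hN_smul _
  have hND : N (∫ t, (ψ t - ψ (t - h)) ∂Q) ≤ J := by rw [hDelta2]; exact hJle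
  have hND0 : 0 ≤ N (∫ t, (ψ t - ψ (t - h)) ∂Q) := N_nonneg hN_add hN_smul _
  have step1 : ENNReal.ofReal ((N (∫ t, (ψ t - ψ (t - h)) ∂Q))^2)
      ≤ (ENNReal.ofReal J)^2 := by
    rw [← ENNReal.ofReal_pow hJ0]
    exact ENNReal.ofReal_le_ofReal (by nlinarith)
  have hJlin : ENNReal.ofReal J = ∫⁻ z, ENNReal.ofReal (N (G z)) ∂ν :=
    ofReal_integral_eq_lintegral_ofReal (N_integrable hN_add hN_smul hintG)
      (Filter.Eventually.of_forall fun z => N_nonneg hN_add hN_smul _)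
  -- pointwise factorization
  set s : 𝒳 × (Fin d → ℝ) → ℝ := fun z => Real.sqrt (r z) with hsdef
  set s' : 𝒳 × (Fin d → ℝ) → ℝ := fun z => Real.sqrt (r' z) with hs'def
  have hsmeas : Measurable s := Real.continuous_sqrt.measurable.comp hrmeas
  have hs'meas : Measurable s' := Real.continuous_sqrt.measurable.comp hr'meas
  have hNfmeas : Measurable fun z => N (f z) :=
    (N_continuous hN_add hN_smul).measurable.comp hfmeas
  have hsq : ∀ z, s z ^ 2 = r z := fun z => Real.sq_sqrt ENNReal.toReal_nonneg
  have hsq' : ∀ z, s' z ^ 2 = r' z := fun z => Real.sq_sqrt ENNReal.toReal_nonneg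
  have hpt : ∀ z, N (G z) = |s' z - s z| * ((s' z + s z) * N (f z)) := by
    intro z
    have h1 : N (G z) = |r' z - r z| * N (f z) := hN_smul _ _
    have h2 : r' z - r z = (s' z - s z) * (s' z + s z) := by
      have := hsq z; have := hsq' z; nlinarith
    rw [h1, h2, abs_mul,
      abs_of_nonneg (by positivity : (0:ℝ) ≤ s' z + s z)]
    ring
  set F1 : 𝒳 × (Fin d → ℝ) → ℝ≥0∞ := fun z => ENNReal.ofReal (|s' z - s z|) with hF1def
  set F2 : 𝒳 × (Fin d → ℝ) → ℝ≥0∞ :=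
    fun z => ENNReal.ofReal ((s' z + s z) * N (f z)) with hF2def
  have hF1meas : Measurable F1 := ((hs'meas.sub hsmeas).abs).ennreal_ofReal
  have hF2meas : Measurable F2 := (((hs'meas.add hsmeas).mul hNfmeas)).ennreal_ofReal
  have hmulpt : ∀ z, ENNReal.ofReal (N (G z)) = F1 z * F2 z := by
    intro z
    rw [hpt z, ENNReal.ofReal_mul (abs_nonneg _)]
  set A := ∫⁻ z, F1 z ^ (2:ℝ) ∂ν with hAdef
  set B := ∫⁻ z, F2 z ^ (2:ℝ) ∂ν with hBdef
  have hCS : ∫⁻ z, ENNReal.ofReal (N (G z)) ∂ν ≤ A ^ (1/2:ℝ) * B ^ (1/2:ℝ) := by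
    calc ∫⁻ z, ENNReal.ofReal (N (G z)) ∂ν = ∫⁻ z, (F1 * F2) z ∂ν := by
          apply lintegral_congr; intro z; exact hmulpt z
      _ ≤ A ^ (1/2:ℝ) * B ^ (1/2:ℝ) :=
          ENNReal.lintegral_mul_le_Lp_mul_Lq ν (by constructor <;> norm_num)
            hF1meas.aemeasurable hF2meas.aemeasurable
  -- identify A with the Hellinger distance
  have hintr : Integrable r ν := Measure.integrable_toReal_rnDeriv
  have hintr' : Integrable r' ν := Measure.integrable_toReal_rnDeriv
  have hHint : Integrable (fun z => (s z - s' z)^2) ν := by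
    refine Integrable.mono' ((hintr.const_mul 2).add (hintr'.const_mul 2))
      ((((hsmeas.sub hs'meas).pow_const 2)).aestronglyMeasurable) ?_
    filter_upwards with z
    rw [Real.norm_eq_abs, abs_of_nonneg (sq_nonneg _)]
    show (s z - s' z)^2 ≤ 2 * r z + 2 * r' z
    have h1 := hsq z; have h2 := hsq' z
    nlinarith [Real.sqrt_nonneg (r z), Real.sqrt_nonneg (r' z), sq_nonneg (s z + s' z)]
  have hA : A = ENNReal.ofReal (hellingerSq P0 Ph) := by
    have hH : hellingerSq P0 Ph = ∫ z, (s z - s' z)^2 ∂ν := rfl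
    rw [hH, ofReal_integral_eq_lintegral_ofReal hHint
      (Filter.Eventually.of_forall fun z => sq_nonneg _)]
    apply lintegral_congr; intro z
    rw [hF1def]
    rw [ENNReal.ofReal_rpow_of_nonneg (abs_nonneg _) (by norm_num : (0:ℝ) ≤ 2)]
    congr 1
    rw [show (2:ℝ) = ((2:ℕ):ℝ) by norm_num, Real.rpow_natCast, sq_abs]
    ring
  -- bound B
  have hBpt : ∀ z, F2 z ^ (2:ℝ)
      ≤ (2 * Ph.rnDeriv ν z + 2 * P0.rnDeriv ν z) * ENNReal.ofReal ((N (f z))^2) := by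
    intro z
    rw [hF2def, ENNReal.ofReal_rpow_of_nonneg
      (mul_nonneg (by positivity) (N_nonneg hN_add hN_smul _)) (by norm_num : (0:ℝ) ≤ 2),
      show (2:ℝ) = ((2:ℕ):ℝ) by norm_num, Real.rpow_natCast]
    have h1 : ((s' z + s z) * N (f z))^2 = (s' z + s z)^2 * (N (f z))^2 := by ring
    rw [h1, ENNReal.ofReal_mul (sq_nonneg _)]
    refine mul_le_mul_left ?_ _
    have h2 : (s' z + s z)^2 ≤ 2 * r' z + 2 * r z := by
      have := hsq z; have := hsq' z
      nlinarith [Real.sqrt_nonneg (r z), Real.sqrt_nonneg (r' z), sq_nonneg (s' z - s z)]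
    calc ENNReal.ofReal ((s' z + s z)^2) ≤ ENNReal.ofReal (2 * r' z + 2 * r z) :=
          ENNReal.ofReal_le_ofReal h2
      _ = ENNReal.ofReal (2 * r' z) + ENNReal.ofReal (2 * r z) :=
          ENNReal.ofReal_add (by positivity) (by positivity)
      _ ≤ 2 * Ph.rnDeriv ν z + 2 * P0.rnDeriv ν z := by
          refine add_le_add ?_ ?_
          · rw [ENNReal.ofReal_mul (by norm_num : (0:ℝ) ≤ 2)]
            refine mul_le_mul' (by simp) ?_
            exact ENNReal.ofReal_toReal_le
          · rw [ENNReal.ofReal_mul (by norm_num : (0:ℝ) ≤ 2)]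
            refine mul_le_mul' (by simp) ?_
            exact ENNReal.ofReal_toReal_le
  have hgNmeas : AEMeasurable (fun z => ENNReal.ofReal ((N (f z))^2)) ν :=
    ((hNfmeas.pow_const 2).ennreal_ofReal).aemeasurable
  have hB : B ≤ 2 * ((∫⁻ z, ENNReal.ofReal ((N (f z))^2) ∂P0)
      + ∫⁻ z, ENNReal.ofReal ((N (f z))^2) ∂Ph) := by
    calc B ≤ ∫⁻ z, (2 * Ph.rnDeriv ν z + 2 * P0.rnDeriv ν z)
          * ENNReal.ofReal ((N (f z))^2) ∂ν := lintegral_mono hBpt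
      _ = 2 * ∫⁻ z, Ph.rnDeriv ν z * ENNReal.ofReal ((N (f z))^2) ∂ν
          + 2 * ∫⁻ z, P0.rnDeriv ν z * ENNReal.ofReal ((N (f z))^2) ∂ν := by
          simp_rw [add_mul, mul_assoc]
          rw [lintegral_add_left (by
            exact (Measure.measurable_rnDeriv _ _).mul
              ((hNfmeas.pow_const 2).ennreal_ofReal) |>.const_mul 2),
            lintegral_const_mul 2 (f := fun z => Ph.rnDeriv ν z * ENNReal.ofReal ((N (f z))^2))
              ((Measure.measurable_rnDeriv _ _).mul
              ((hNfmeas.pow_const 2).ennreal_ofReal)),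
            lintegral_const_mul 2 (f := fun z => P0.rnDeriv ν z * ENNReal.ofReal ((N (f z))^2))
              ((Measure.measurable_rnDeriv _ _).mul
              ((hNfmeas.pow_const 2).ennreal_ofReal))]
      _ = 2 * ∫⁻ z, ENNReal.ofReal ((N (f z))^2) ∂Ph
          + 2 * ∫⁻ z, ENNReal.ofReal ((N (f z))^2) ∂P0 := by
          rw [MeasureTheory.lintegral_rnDeriv_mul hach hgNmeas,
            MeasureTheory.lintegral_rnDeriv_mul hac0 hgNmeas]
      _ = 2 * ((∫⁻ z, ENNReal.ofReal ((N (f z))^2) ∂P0)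
          + ∫⁻ z, ENNReal.ofReal ((N (f z))^2) ∂Ph) := by ring
  -- final assembly
  have hABsq : (A ^ (1/2:ℝ) * B ^ (1/2:ℝ)) ^ 2 = A * B := by
    rw [mul_pow, ← ENNReal.rpow_natCast (A ^ (1/2:ℝ)) 2,
      ← ENNReal.rpow_natCast (B ^ (1/2:ℝ)) 2, ← ENNReal.rpow_mul, ← ENNReal.rpow_mul]
    norm_num
  calc ENNReal.ofReal ((N (∫ t, (ψ t - ψ (t - h)) ∂Q))^2)
      ≤ (ENNReal.ofReal J)^2 := step1
    _ = (∫⁻ z, ENNReal.ofReal (N (G z)) ∂ν)^2 := by rw [hJlin]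
    _ ≤ (A ^ (1/2:ℝ) * B ^ (1/2:ℝ))^2 := pow_le_pow_left' hCS 2
    _ = A * B := hABsq
    _ ≤ ENNReal.ofReal (hellingerSq P0 Ph) * (2 * ((∫⁻ z, ENNReal.ofReal ((N (f z))^2) ∂P0)
          + ∫⁻ z, ENNReal.ofReal ((N (f z))^2) ∂Ph)) := by
          rw [hA]; exact mul_le_mul_right hB _
    _ = 2 * ((∫⁻ z, ENNReal.ofReal ((N (f z))^2) ∂P0)
          + ∫⁻ z, ENNReal.ofReal ((N (f z))^2) ∂Ph)
          * ENNReal.ofReal (hellingerSq P0 Ph) := by ring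
end
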